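/- Let d ≥ 1 and n = m − d. For every t with τ_{d−1} ≤ t < τ_{n+1}, the B-spline curve satisfies z(t) ∈ ⋃_{i=d−1}^{n} conv{p_{i−d+1}, …, p_i}; that is, the entire curve is contained in the union of the convex hulls of all groups of d successive control points. -/

import Mathlib

/-! On a knot span `[τ i, τ (i + 1))` only the `d` basis functions `B_{i-d+1,d}, …, B_{i,d}`
can be nonzero. They are nonnegative, and they sum to one because in the Cox–de Boor recursion
the two weights attached to each `B_{j,d-1}` add up to one while the boundary terms vanish. So
`z t` is a convex combination of `p_{i-d+1}, …, p_i`, and the increasing knots place every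
`t ∈ [τ (d - 1), τ (n + 1))` in such a span with `d - 1 ≤ i ≤ n`. -/

/-- Cox–de Boor B-spline basis function `B_{i,d}(t)` of order `d` for the knot
vector `τ`.  In Lean, division by zero yields zero, which matches the standard
convention that any term of the recursion whose denominator vanishes is taken
to be zero. -/
noncomputable def bspline (τ : ℕ → ℝ) : ℕ → ℕ → ℝ → ℝ
  | 0, _, _ => 0
  | 1, i, t => if τ i ≤ t ∧ t < τ (i + 1) then 1 else 0
  | d + 2, i, t =>
      (t - τ i) / (τ (i + d + 1) - τ i) * bspline τ (d + 1) i t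
      + (τ (i + d + 2) - t) / (τ (i + d + 2) - τ (i + 1)) * bspline τ (d + 1) (i + 1) t

open Finset

section

variable {τ : ℕ → ℝ} {t : ℝ}

theorem bspline_eq_zero_of_notMem_Ico :
    ∀ {d j : ℕ}, MonotoneOn τ (Set.Icc j (j + d)) →
      t ∉ Set.Ico (τ j) (τ (j + d)) → bspline τ d j t = 0
  | 0, _, _, _ => rfl
  | 1, _, _, ht => if_neg ht
  | d + 2, j, hτ, ht => by
    have hleft : bspline τ (d + 1) j t = 0 := by
      have : τ (j + (d + 1)) ≤ τ (j + (d + 2)) :=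
        hτ ⟨by omega, by omega⟩ ⟨by omega, le_rfl⟩ (by omega)
      exact bspline_eq_zero_of_notMem_Ico (hτ.mono (Set.Icc_subset_Icc_right (by omega)))
        fun h => ht (Set.Ico_subset_Ico_right this h)
    have hright : bspline τ (d + 1) (j + 1) t = 0 := by
      have : τ j ≤ τ (j + 1) := hτ ⟨le_rfl, by omega⟩ ⟨by omega, by omega⟩ (by omega)
      rw [show j + (d + 2) = j + 1 + (d + 1) by omega] at hτ ht
      exact bspline_eq_zero_of_notMem_Ico (hτ.mono (Set.Icc_subset_Icc_left (by omega)))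
        fun h => ht (Set.Ico_subset_Ico_left this h)
    simp [bspline, hleft, hright]

theorem mem_Ico_of_bspline_ne_zero {d j : ℕ} (hτ : MonotoneOn τ (Set.Icc j (j + d)))
    (h : bspline τ d j t ≠ 0) : t ∈ Set.Ico (τ j) (τ (j + d)) :=
  not_not.mp (mt (bspline_eq_zero_of_notMem_Ico hτ) h)

theorem bspline_nonneg : ∀ {d j : ℕ}, MonotoneOn τ (Set.Icc j (j + d)) → 0 ≤ bspline τ d j t
  | 0, _, _ => le_rfl
  | 1, _, _ => by unfold bspline; split_ifs <;> norm_num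
  | d + 2, j, hτ => by
    have hτl : MonotoneOn τ (Set.Icc j (j + (d + 1))) :=
      hτ.mono (Set.Icc_subset_Icc_right (by omega))
    have hτr : MonotoneOn τ (Set.Icc (j + 1) (j + 1 + (d + 1))) :=
      hτ.mono (Set.Icc_subset_Icc (by omega) (by omega))
    rw [bspline]
    -- each weight is nonnegative wherever the B-spline it multiplies is nonzero
    refine add_nonneg ?_ ?_
    · rcases eq_or_ne (bspline τ (d + 1) j t) 0 with h | h
      · simp [h]
      · obtain ⟨h₁, h₂⟩ := mem_Ico_of_bspline_ne_zero hτl h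
        rw [← add_assoc] at h₂
        exact mul_nonneg (div_nonneg (by linarith) (by linarith)) (bspline_nonneg hτl)
    · rcases eq_or_ne (bspline τ (d + 1) (j + 1) t) 0 with h | h
      · simp [h]
      · obtain ⟨h₁, h₂⟩ := mem_Ico_of_bspline_ne_zero hτr h
        rw [show j + 1 + (d + 1) = j + d + 2 by omega] at h₂
        exact mul_nonneg (div_nonneg (by linarith) (by linarith)) (bspline_nonneg hτr)

theorem sum_bspline_eq_one {e a : ℕ} (hτ : MonotoneOn τ (Set.Icc a (a + 2 * e + 1)))
    (ht : t ∈ Set.Ico (τ (a + e)) (τ (a + e + 1))) :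
    ∑ k ∈ range (e + 1), bspline τ (e + 1) (a + k) t = 1 := by
  induction e generalizing a with
  | zero =>
    rw [sum_range_one]
    exact if_pos ht
  | succ e ih =>
    have ht₁ : τ (a + e + 1) ≤ t := ht.1
    have ht₂ : t < τ (a + e + 2) := ht.2
    set B : ℕ → ℝ := fun j => bspline τ (e + 1) j t
    set H : ℕ → ℝ := fun j => (t - τ j) / (τ (j + e + 1) - τ j) * B j
    set G : ℕ → ℝ := fun j => (τ (j + e + 1) - t) / (τ (j + e + 1) - τ j) * B j
    have hτB : ∀ j, a ≤ j → j ≤ a + e + 2 → MonotoneOn τ (Set.Icc j (j + (e + 1))) :=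
      fun j hj hj' => hτ.mono (Set.Icc_subset_Icc hj (by omega))
    have hsplit : ∀ j, bspline τ (e + 2) j t = H j + G (j + 1) := fun j => by
      simp only [H, G, B, bspline, show j + 1 + e + 1 = j + e + 2 by omega]
    have hHa : H a = 0 := by
      have : B a = 0 := bspline_eq_zero_of_notMem_Ico (hτB a le_rfl (by omega))
        fun h => (not_lt.mpr ht₁) h.2
      simp [H, this]
    have hGe : G (a + e + 2) = 0 := by
      have : B (a + e + 2) = 0 := bspline_eq_zero_of_notMem_Ico (hτB _ (by omega) le_rfl)
        fun h => (not_le.mpr ht₂) h.1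
      simp [G, this]
    -- on the span of `t` all denominators are positive, so the two weights add up to one
    have hHG : ∀ k < e + 1, H (a + k + 1) + G (a + k + 1) = B (a + k + 1) := by
      intro k hk
      have h₁ : τ (a + k + 1) ≤ τ (a + e + 1) :=
        hτ ⟨by omega, by omega⟩ ⟨by omega, by omega⟩ (by omega)
      have h₂ : τ (a + e + 2) ≤ τ (a + k + 1 + e + 1) :=
        hτ ⟨by omega, by omega⟩ ⟨by omega, by omega⟩ (by omega)
      have hden : τ (a + k + 1 + e + 1) - τ (a + k + 1) ≠ 0 := by linarith
      simp only [H, G]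
      field_simp
      ring
    calc ∑ k ∈ range (e + 2), bspline τ (e + 2) (a + k) t
        = ∑ k ∈ range (e + 2), H (a + k) + ∑ k ∈ range (e + 2), G (a + k + 1) := by
          simp only [hsplit, sum_add_distrib]
      _ = ∑ k ∈ range (e + 1), (H (a + k + 1) + G (a + k + 1)) := by
          rw [sum_range_succ' (fun k => H (a + k)), sum_range_succ (fun k => G (a + k + 1)),
            add_zero, hHa, show G (a + (e + 1) + 1) = 0 from hGe, add_zero, add_zero,
            sum_add_distrib]
          rfl
      _ = ∑ k ∈ range (e + 1), B (a + 1 + k) := sum_congr rfl fun k hk => by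
          rw [hHG k (mem_range.mp hk), add_right_comm]
      _ = 1 := ih (hτ.mono (Set.Icc_subset_Icc (by omega) (by omega)))
          (by rwa [show a + 1 + e = a + (e + 1) by omega])

theorem bspline_sum_smul_mem_convexHull {E : Type*} [AddCommGroup E] [Module ℝ E]
    (p : ℕ → E) {N a e : ℕ} (hτ : MonotoneOn τ (Set.Iic (N + e))) (haN : a + e < N)
    (ht : t ∈ Set.Ico (τ (a + e)) (τ (a + e + 1))) :
    ∑ j ∈ range N, bspline τ (e + 1) j t • p j ∈ convexHull ℝ (p '' Set.Icc a (a + e)) := by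
  have hτB : ∀ j < N, MonotoneOn τ (Set.Icc j (j + (e + 1))) :=
    fun j hj => hτ.mono fun k hk => Set.mem_Iic.mpr (by have := hk.2; omega)
  have hvanish : ∀ j ∈ range N, j ∉ Ico a (a + e + 1) → bspline τ (e + 1) j t • p j = 0 := by
    intro j hj hja
    rw [mem_range] at hj
    rw [mem_Ico, not_and_or, not_le, not_lt] at hja
    refine smul_eq_zero_of_left (bspline_eq_zero_of_notMem_Ico (hτB j hj) fun h => ?_) _
    rcases hja with hja | hja
    · have : τ (j + (e + 1)) ≤ τ (a + e) :=
        hτ (Set.mem_Iic.mpr (by omega)) (Set.mem_Iic.mpr (by omega)) (by omega)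
      exact not_lt.mpr (this.trans ht.1) h.2
    · have : τ (a + e + 1) ≤ τ j := hτ (Set.mem_Iic.mpr (by omega)) (Set.mem_Iic.mpr (by omega)) hja
      exact not_le.mpr (ht.2.trans_le this) h.1
  rw [← sum_subset (fun j hj => mem_range.mpr (by have := (mem_Ico.mp hj).2; omega)) hvanish,
    sum_Ico_eq_sum_range, show a + e + 1 - a = e + 1 by omega]
  refine (convex_convexHull ℝ _).sum_mem (fun k hk => bspline_nonneg ?_)
    (sum_bspline_eq_one ?_ ht) fun k hk => subset_convexHull ℝ _ ⟨a + k, ?_, rfl⟩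
  · exact hτB _ (by have := mem_range.mp hk; omega)
  · exact hτ.mono fun k hk => Set.mem_Iic.mpr (by have := hk.2; omega)
  · have := mem_range.mp hk
    exact ⟨by omega, by omega⟩

theorem exists_mem_Icc_mem_Ico_succ {a b : ℕ} (hab : a ≤ b) (ha : τ a ≤ t)
    (hb : t < τ (b + 1)) :
    ∃ i ∈ Set.Icc a b, t ∈ Set.Ico (τ i) (τ (i + 1)) := by
  induction b, hab using Nat.le_induction with
  | base => exact ⟨a, ⟨le_rfl, le_rfl⟩, ha, hb⟩
  | succ b hab ih =>
    by_cases hbt : τ (b + 1) ≤ t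
    · exact ⟨b + 1, ⟨by omega, le_rfl⟩, hbt, hb⟩
    · obtain ⟨i, hi, hit⟩ := ih (not_le.mp hbt)
      exact ⟨i, ⟨hi.1, hi.2.trans (Nat.le_succ b)⟩, hit⟩

end

/-- the whole B-spline curve lies in the union of the convex hulls
of all groups of `d` successive control points (with `n = m - d`). -/
theorem bspline_curve_union_convex_hulls (q m d : ℕ) (τ : ℕ → ℝ)
    (hτ : ∀ j, j < m → τ j < τ (j + 1))
    (hd : 1 ≤ d) (hdm : d ≤ m)
    (p : ℕ → EuclideanSpace ℝ (Fin q))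
    (t : ℝ) (ht1 : τ (d - 1) ≤ t) (ht2 : t < τ (m - d + 1)) :
    (∑ j ∈ Finset.range (m - d + 1), bspline τ d j t • p j) ∈
      ⋃ i ∈ Set.Icc (d - 1) (m - d),
        convexHull ℝ (p '' Set.Icc (i - (d - 1)) i) := by
  obtain ⟨e, rfl⟩ : ∃ e, d = e + 1 := ⟨d - 1, by omega⟩
  rw [Nat.add_sub_cancel] at ht1 ⊢
  have hmono : MonotoneOn τ (Set.Iic m) := (strictMonoOn_Iic_of_lt_succ hτ).monotoneOn
  have hem : e ≤ m - (e + 1) := by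
    by_contra! h
    have : τ (m - (e + 1) + 1) ≤ τ e :=
      hmono (Set.mem_Iic.mpr (by omega)) (Set.mem_Iic.mpr (by omega)) (by omega)
    linarith
  obtain ⟨i, hi, hti⟩ := exists_mem_Icc_mem_Ico_succ hem ht1 ht2
  obtain ⟨a, rfl⟩ : ∃ a, i = a + e := ⟨i - e, by have := hi.1; omega⟩
  refine Set.mem_biUnion hi ?_
  rw [Nat.add_sub_cancel]
  exact bspline_sum_smul_mem_convexHull p
    (hmono.mono (Set.Iic_subset_Iic.mpr (by omega))) (by have := hi.2; omega) hti
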